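/- Let ξ be a primitive root of unity of odd order r, b a positive integer, c = gcd(r,b), b₁ = b/c, r₁ = r/c, and let a be an integer. Then Σ_{0<n<2r, n odd} ξ^{b(n²-1)/4}·ξ^{an} equals 0 if c does not divide a, and equals ξ^{-c·a₁²·b₁*}·γ_b(ξ) if a = c·a₁, where b₁* is any integer with b₁·b₁* ≡ 1 (mod r₁). -/

import Mathlib

open Finset

/-!
For odd `n = 2k + 1` the exponent `b(n² - 1)/4 + an` is `b(k² + k) + a(2k + 1)`, and `k` only
matters modulo `r`, so the sum is `∑_{x ∈ ℤ/r} ψ(b(x² + x) + a(2x + 1))` for the additive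
character `ψ(x) = ξ^x`. Since `(x + t)² + (x + t) = x² + x + t(2x + 1) + t²`, the substitution
`x ↦ x + t` trades the twist `a` for `a + bt` at the cost of a factor `ψ(bt² + 2at)`.
With `t = r/c` (so `bt = 0`) the sum is multiplied by `ξ^(2at) ≠ 1` when `c ∤ a`, hence vanishes;
with `t = a₁b₁*` (so `bt = a`), `γ_b(ξ)` is `ψ(bt²) = ξ^(c·a₁²·b₁*)` times the twisted sum.
-/

lemma sum_filter_odd_range_two_mul {M : Type*} [AddCommMonoid M] (f : ℕ → M) (r : ℕ) :
    ∑ n ∈ (range (2 * r)).filter Odd, f n = ∑ k ∈ range r, f (2 * k + 1) := by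
  rw [sum_filter]
  induction r with
  | zero => simp
  | succ r ih =>
    rw [mul_add, mul_one, sum_range_succ, sum_range_succ, ih, sum_range_succ]
    simp [Nat.odd_iff]

lemma ZMod.sum_range_natCast {M : Type*} [AddCommMonoid M] (n : ℕ) [NeZero n]
    (f : ZMod n → M) : ∑ k ∈ range n, f k = ∑ x, f x :=
  sum_nbij' (↑) ZMod.val (by simp) (by simp [ZMod.val_lt])
    (fun _ hk => ZMod.val_cast_of_lt (mem_range.1 hk)) (fun x _ => ZMod.natCast_zmod_val x)
    (fun _ _ => rfl)

lemma AddChar.zmodChar_intCast {M : Type*} [DivisionCommMonoid M] {n : ℕ} [NeZero n] {ζ : M}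
    (hζ : ζ ^ n = 1) (m : ℤ) : zmodChar n hζ m = ζ ^ m := by
  rw [← zsmul_one, map_zsmul_eq_zpow, ← Nat.cast_one, zmodChar_apply', pow_one]

lemma Int.dvd_of_mul_dvd_two_mul_mul {c m a : ℤ} (hc : Odd c) (hm : m ≠ 0)
    (h : c * m ∣ 2 * a * m) : c ∣ a :=
  (Int.isCoprime_two_right.2 hc).dvd_of_dvd_mul_left ((mul_dvd_mul_iff_right hm).1 h)

section QuadraticSum

variable {R M : Type*} [CommRing R] [Fintype R]

lemma sum_addChar_quadratic_shift [CommSemiring M] (ψ : AddChar R M) (B A t : R) :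
    ∑ x, ψ (B * (x ^ 2 + x) + A * (2 * x + 1)) =
      ψ (B * t ^ 2 + 2 * A * t) * ∑ x, ψ (B * (x ^ 2 + x) + (A + B * t) * (2 * x + 1)) := by
  rw [← Fintype.sum_equiv (Equiv.addRight t) _ _ (fun _ => rfl), mul_sum]
  refine sum_congr rfl fun x _ => ?_
  rw [← AddChar.map_add_eq_mul]
  congr 1
  simp only [Equiv.coe_addRight]
  ring

lemma sum_addChar_quadratic_eq_of_mul_eq [CommSemiring M] (ψ : AddChar R M) {B A t : R}
    (h : B * t = A) :
    ∑ x, ψ (B * (x ^ 2 + x) + A * (2 * x + 1)) = ψ (-(B * t ^ 2)) * ∑ x, ψ (B * (x ^ 2 + x)) := by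
  have hshift := sum_addChar_quadratic_shift ψ B 0 t
  simp only [zero_mul, add_zero, mul_zero, zero_add, h] at hshift
  rw [hshift, ← mul_assoc, ← AddChar.map_add_eq_mul, neg_add_cancel, AddChar.map_zero_eq_one,
    one_mul]

lemma sum_addChar_quadratic_eq_zero [CommRing M] [IsDomain M] (ψ : AddChar R M) {B A t : R}
    (h : B * t = 0) (hψ : ψ (2 * A * t) ≠ 1) :
    ∑ x, ψ (B * (x ^ 2 + x) + A * (2 * x + 1)) = 0 := by
  refine eq_zero_of_mul_eq_self_left hψ ?_
  have hshift := sum_addChar_quadratic_shift ψ B A t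
  rw [h, add_zero, sq, ← mul_assoc, h, zero_mul, zero_add] at hshift
  exact hshift.symm

end QuadraticSum

lemma sum_odd_eq_sum_zmodChar {r : ℕ} [NeZero r] {ξ : ℂ} (hξ : ξ ^ r = 1) (b : ℕ) (a : ℤ) :
    ∑ n ∈ (range (2 * r)).filter (fun n => Odd n), ξ ^ (b * (n ^ 2 - 1) / 4) * ξ ^ (a * n) =
      ∑ x : ZMod r, AddChar.zmodChar r hξ (b * (x ^ 2 + x) + a * (2 * x + 1)) := by
  rw [sum_filter_odd_range_two_mul, ← ZMod.sum_range_natCast]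
  refine sum_congr rfl fun k _ => ?_
  have hexp : b * ((2 * k + 1) ^ 2 - 1) / 4 = b * (k ^ 2 + k) := by
    rw [show (2 * k + 1) ^ 2 - 1 = 4 * (k ^ 2 + k) by ring_nf; omega, mul_left_comm,
      Nat.mul_div_cancel_left _ four_pos]
  rw [AddChar.map_add_eq_mul, hexp, ← AddChar.zmodChar_apply' hξ, ← AddChar.zmodChar_intCast hξ]
  push_cast
  rfl

lemma natCast_mul_natCast_div_eq_zero {r b c : ℕ} (hcr : c ∣ r) (hcb : c ∣ b) :
    (b : ZMod r) * ((r / c : ℕ) : ZMod r) = 0 := by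
  rw [← Nat.cast_mul, ZMod.natCast_eq_zero_iff]
  simpa only [Nat.mul_div_cancel' hcr] using Nat.mul_dvd_mul_right hcb (r / c)

lemma natCast_mul_eq_of_div_mul_modEq_one {r b c : ℕ} (hcr : c ∣ r) (hcb : c ∣ b) {s : ℤ}
    (h : ((b / c : ℕ) : ℤ) * s ≡ 1 [ZMOD ((r / c : ℕ) : ℤ)]) : (b : ZMod r) * s = c := by
  have hmod := h.mul_left' (c := (c : ℤ))
  rw [← Nat.cast_mul, Nat.mul_div_cancel' hcr] at hmod
  have hzmod := (ZMod.intCast_eq_intCast_iff _ _ r).2 hmod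
  rw [← Nat.mul_div_cancel' hcb, Nat.cast_mul]
  simpa only [Int.cast_mul, Int.cast_natCast, Int.cast_one, mul_one, mul_assoc] using hzmod

lemma IsPrimitiveRoot.zmodChar_two_mul_mul_div_ne_one {r c : ℕ} [NeZero r] {ξ : ℂ}
    (hξ : IsPrimitiveRoot ξ r) (hr : Odd r) (hcr : c ∣ r) {a : ℤ} (ha : ¬ (c : ℤ) ∣ a) :
    AddChar.zmodChar r hξ.pow_eq_one (2 * a * (r / c : ℕ)) ≠ 1 := by
  have hc : Odd (c : ℤ) := Int.odd_coe_nat _ |>.2 (hr.of_dvd_nat hcr)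
  have hrc : (c : ℤ) * (r / c : ℕ) = r := by exact_mod_cast Nat.mul_div_cancel' hcr
  have hr₁ : ((r / c : ℕ) : ℤ) ≠ 0 := by
    rintro h
    rw [h, mul_zero] at hrc
    exact hr.pos.ne (by exact_mod_cast hrc)
  rw [show (2 * a * (r / c : ℕ) : ZMod r) = ((2 * a * (r / c : ℕ) : ℤ) : ZMod r) by
      simp only [Int.cast_mul, Int.cast_ofNat, Int.cast_natCast],
    AddChar.zmodChar_intCast, Ne, hξ.zpow_eq_one_iff_dvd, ← hrc]
  exact fun h => ha (Int.dvd_of_mul_dvd_two_mul_mul hc hr₁ h)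

theorem stmt6_general (r b : ℕ) (hr : Odd r)
    (ξ : ℂ) (hξ : IsPrimitiveRoot ξ r) (a : ℤ) :
    ((¬ ((Nat.gcd r b : ℤ) ∣ a)) →
      (∑ n ∈ (range (2 * r)).filter (fun n => Odd n),
          ξ ^ (b * (n ^ 2 - 1) / 4) * ξ ^ (a * n)) = 0) ∧
    (∀ a₁ bs : ℤ, a = (Nat.gcd r b : ℤ) * a₁ →
      ((b / Nat.gcd r b : ℕ) : ℤ) * bs ≡ 1 [ZMOD ((r / Nat.gcd r b : ℕ) : ℤ)] →
      (∑ n ∈ (range (2 * r)).filter (fun n => Odd n),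
          ξ ^ (b * (n ^ 2 - 1) / 4) * ξ ^ (a * n))
        = ξ ^ (-(Nat.gcd r b : ℤ) * a₁ ^ 2 * bs) *
          ∑ n ∈ (range (2 * r)).filter (fun n => Odd n), ξ ^ (b * (n ^ 2 - 1) / 4)) := by
  have : NeZero r := ⟨hr.pos.ne'⟩
  have hcr := Nat.gcd_dvd_left r b
  have hcb := Nat.gcd_dvd_right r b
  rw [sum_odd_eq_sum_zmodChar hξ.pow_eq_one]
  constructor
  · intro hca
    exact sum_addChar_quadratic_eq_zero _ (natCast_mul_natCast_div_eq_zero hcr hcb)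
      (hξ.zmodChar_two_mul_mul_div_ne_one hr hcr hca)
  · intro a₁ bs ha hbs
    have hbbs := natCast_mul_eq_of_div_mul_modEq_one hcr hcb hbs
    have hγ := sum_odd_eq_sum_zmodChar hξ.pow_eq_one b 0
    simp only [Int.cast_zero, zero_mul, add_zero, zpow_zero, mul_one] at hγ
    rw [hγ, sum_addChar_quadratic_eq_of_mul_eq _ (t := (a₁ * bs : ZMod r))
      (by rw [ha]; push_cast; linear_combination a₁ * hbbs),
      ← AddChar.zmodChar_intCast hξ.pow_eq_one]
    congr 2
    push_cast
    linear_combination (-(a₁ ^ 2 * bs)) * hbbs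

/-- Laplace transform computation: for `ξ` a primitive root of unity of odd order `r`,
`b > 0`, `c = gcd(r,b)`, `b₁ = b/c`, `r₁ = r/c` and `a ∈ ℤ`, the twisted Gauss sum
`Σ_{0<n<2r, n odd} ξ^{b(n²-1)/4}·ξ^{an}` vanishes if `c ∤ a`, and equals
`ξ^{-c·a₁²·b₁*}·γ_b(ξ)` if `a = c·a₁`, where `b₁·b₁* ≡ 1 (mod r₁)`. -/
theorem stmt6 (r b : ℕ) (hr : Odd r) (hr0 : 0 < r) (hb : 0 < b)
    (ξ : ℂ) (hξ : IsPrimitiveRoot ξ r) (a : ℤ) :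
    ((¬ ((Nat.gcd r b : ℤ) ∣ a)) →
      (∑ n ∈ (range (2 * r)).filter (fun n => Odd n),
          ξ ^ (b * (n ^ 2 - 1) / 4) * ξ ^ (a * n)) = 0) ∧
    (∀ a₁ bs : ℤ, a = (Nat.gcd r b : ℤ) * a₁ →
      ((b / Nat.gcd r b : ℕ) : ℤ) * bs ≡ 1 [ZMOD ((r / Nat.gcd r b : ℕ) : ℤ)] →
      (∑ n ∈ (range (2 * r)).filter (fun n => Odd n),
          ξ ^ (b * (n ^ 2 - 1) / 4) * ξ ^ (a * n))
        = ξ ^ (-(Nat.gcd r b : ℤ) * a₁ ^ 2 * bs) *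
          ∑ n ∈ (range (2 * r)).filter (fun n => Odd n), ξ ^ (b * (n ^ 2 - 1) / 4)) :=
  stmt6_general r b hr ξ hξ a
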